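/- arXiv:1405.2815 — 3 statements merged into one kernel-verified Lean document; each statement's English description precedes it below -/
import Mathlib

section
/- Suppose μ_{12} > μ_{22}, μ_{21} < μ_{11}, and λ_1 < μ_{11}. Then ε* = min((λ_1 − μ_{11})/(μ_{21} − μ_{11}), 1) is feasible for the two-user two-band linear program (i.e., ε* ∈ [0,1] and λ_1 ≤ ε* μ_{21} + (1 − ε*) μ_{11}), and for every feasible ε ∈ [0,1] one has ε μ_{12} + (1 − ε) μ_{22} ≤ ε* μ_{12} + (1 − ε*) μ_{22}. -/
/-- optimal solution of the two-user two-band linear program when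
`μ₁₂ > μ₂₂`, `μ₂₁ < μ₁₁` and `λ₁ < μ₁₁`. -/
theorem two_user_two_band_case1 (μ11 μ12 μ21 μ22 lam1 : ℝ)
    (h11 : 0 ≤ μ11) (h12 : 0 ≤ μ12) (h21 : 0 ≤ μ21) (h22 : 0 ≤ μ22) (hlam : 0 ≤ lam1)
    (hA : μ22 < μ12) (hB : μ21 < μ11) (hC : lam1 < μ11) :
    (0 ≤ min ((lam1 - μ11) / (μ21 - μ11)) 1 ∧
      min ((lam1 - μ11) / (μ21 - μ11)) 1 ≤ 1 ∧
      lam1 ≤ (min ((lam1 - μ11) / (μ21 - μ11)) 1) * μ21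
        + (1 - min ((lam1 - μ11) / (μ21 - μ11)) 1) * μ11) ∧
    ∀ ε : ℝ, 0 ≤ ε → ε ≤ 1 → lam1 ≤ ε * μ21 + (1 - ε) * μ11 →
      ε * μ12 + (1 - ε) * μ22 ≤
        (min ((lam1 - μ11) / (μ21 - μ11)) 1) * μ12
          + (1 - min ((lam1 - μ11) / (μ21 - μ11)) 1) * μ22 := by
  have hd : μ21 - μ11 < 0 := by linarith
  have hdne : μ21 - μ11 ≠ 0 := ne_of_lt hd
  set q : ℝ := (lam1 - μ11) / (μ21 - μ11) with hqdef
  have hq0 : 0 ≤ q := div_nonneg_of_nonpos (by linarith) (le_of_lt hd)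
  have hqmul : q * (μ21 - μ11) = lam1 - μ11 := div_mul_cancel₀ _ hdne
  set e : ℝ := min q 1 with hedef
  have he0 : 0 ≤ e := le_min hq0 zero_le_one
  have he1 : e ≤ 1 := min_le_right _ _
  have heq : e ≤ q := min_le_left _ _
  have hfeas : lam1 ≤ e * μ21 + (1 - e) * μ11 := by
    have : e * (μ21 - μ11) ≥ q * (μ21 - μ11) :=
      mul_le_mul_of_nonpos_right heq (le_of_lt hd)
    nlinarith
  refine ⟨⟨he0, he1, hfeas⟩, ?_⟩
  intro ε hε0 hε1 hεfeas
  have hεq : ε ≤ q := by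
    rw [hqdef, le_div_iff_of_neg hd]
    nlinarith
  have hεe : ε ≤ e := le_min hεq hε1
  nlinarith [mul_le_mul_of_nonneg_right hεe (le_of_lt (sub_pos.mpr hA))]
end

section
/- Let M_p, M_s ≥ 1 be integers and β ≥ 0, and set μ_{jk} = β for all j ∈ {1,…,M_p} and k ∈ {1,…,M_s}. Then the symmetric rate tuple (λ, λ, …, λ) with λ ≥ 0 belongs to the stability region R(S) if and only if λ ≤ min(M_p/M_s, 1) · β. -/
/-- The stability region of the orthogonal band-allocation system. -/
def stabilityRegion (Mp Ms : ℕ) (μ : Fin Mp → Fin Ms → ℝ) : Set (Fin Ms → ℝ) :=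
  {lam | (∀ k, 0 ≤ lam k) ∧ ∃ ω : Fin Mp → Fin Ms → ℝ,
    (∀ j k, 0 ≤ ω j k) ∧ (∀ k, ∑ j, ω j k ≤ 1) ∧ (∀ j, ∑ k, ω j k ≤ 1) ∧
    ∀ k, lam k ≤ ∑ j, ω j k * μ j k}

/-- fully symmetric case. -/
theorem fully_symmetric_stability (Mp Ms : ℕ) (hMp : 1 ≤ Mp) (hMs : 1 ≤ Ms)
    (β : ℝ) (hβ : 0 ≤ β) (lam : ℝ) (hlam : 0 ≤ lam) :
    ((fun _ : Fin Ms => lam) ∈ stabilityRegion Mp Ms (fun _ _ => β)) ↔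
      lam ≤ min ((Mp : ℝ) / (Ms : ℝ)) 1 * β := by
  have hMp' : (0:ℝ) < Mp := by exact_mod_cast hMp
  have hMs' : (0:ℝ) < Ms := by exact_mod_cast hMs
  constructor
  · rintro ⟨-, ω, hω0, hcol, hrow, hrate⟩
    rw [min_mul_of_nonneg _ _ hβ]
    refine le_min ?_ ?_
    · -- sum over k
      have hsum : (Ms:ℝ) * lam ≤ (Mp:ℝ) * β := by
        have h1 : (Ms:ℝ) * lam ≤ ∑ k, ∑ j, ω j k * β := by
          calc (Ms:ℝ) * lam = ∑ _k : Fin Ms, lam := by simp [mul_comm]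
            _ ≤ _ := Finset.sum_le_sum fun k _ => hrate k
        have h2 : ∑ k : Fin Ms, ∑ j : Fin Mp, ω j k * β ≤ (Mp:ℝ) * β := by
          rw [Finset.sum_comm]
          calc ∑ j : Fin Mp, ∑ k : Fin Ms, ω j k * β
              = ∑ j : Fin Mp, (∑ k, ω j k) * β := by
                simp [Finset.sum_mul]
            _ ≤ ∑ j : Fin Mp, 1 * β := Finset.sum_le_sum fun j _ => by
                exact mul_le_mul_of_nonneg_right (hrow j) hβ
            _ = (Mp:ℝ) * β := by simp
        linarith
      rw [div_mul_eq_mul_div, le_div_iff₀ hMs']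
      linarith
    · have h := hrate ⟨0, hMs⟩
      have h2 : ∑ j, ω j ⟨0, hMs⟩ * β ≤ β := by
        rw [← Finset.sum_mul]
        nlinarith [hcol (⟨0, hMs⟩ : Fin Ms)]
      rw [one_mul]; exact le_trans h h2
  · intro h
    set c : ℝ := min ((Mp : ℝ) / (Ms : ℝ)) 1 with hc
    have hc0 : 0 ≤ c := le_min (by positivity) zero_le_one
    refine ⟨fun _ => hlam, fun _ _ => c / Mp, fun _ _ => by positivity, ?_, ?_, ?_⟩
    · intro k
      rw [Finset.sum_const, Finset.card_univ, Fintype.card_fin, nsmul_eq_mul,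
        mul_div_cancel₀ _ (ne_of_gt hMp')]
      exact min_le_right _ _
    · intro j
      rw [Finset.sum_const, Finset.card_univ, Fintype.card_fin, nsmul_eq_mul]
      have hle : c * Ms ≤ Mp := by
        have h' : c ≤ (Mp:ℝ)/(Ms:ℝ) := min_le_left _ _
        rwa [le_div_iff₀ hMs'] at h'
      rw [mul_comm, div_mul_eq_mul_div, div_le_one hMp']
      exact hle
    · intro k
      rw [Finset.sum_const, Finset.card_univ, Fintype.card_fin, nsmul_eq_mul,
        ← mul_assoc, mul_div_cancel₀ _ (ne_of_gt hMp')]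
      exact h
end

section
/- Let M_p, M_s ≥ 1, let μ_{jk} ≥ 0 for all j ∈ {1,…,M_p}, k ∈ {1,…,M_s}, and let Γ_{jk} ∈ [0,1] satisfy Σ_{j=1}^{M_p} Γ_{jk} ≤ 1 for every k. Then the rate tuple (λ_1,…,λ_{M_s}) defined by λ_k = Σ_{j=1}^{M_p} μ_{jk} Γ_{jk} ∏_{v≠k} (1 − Γ_{jv}) belongs to the stability region R(S) of the orthogonal system. Hence the stability region of the random-allocation system Ŝ is contained in R(S). -/
private lemma sum_prod_le {α : Type*} [DecidableEq α] (s : Finset α) (x : α → ℝ)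
    (h0 : ∀ a, 0 ≤ x a) (h1 : ∀ a, x a ≤ 1) :
    ∑ k ∈ s, x k * ∏ v ∈ s.erase k, (1 - x v) ≤ 1 - ∏ v ∈ s, (1 - x v) := by
  classical
  induction s using Finset.induction_on with
  | empty => simp
  | @insert a s ha ih =>
    have hP0 : 0 ≤ ∏ v ∈ s, (1 - x v) :=
      Finset.prod_nonneg fun v _ => by linarith [h1 v]
    have hP1 : ∏ v ∈ s, (1 - x v) ≤ 1 :=
      Finset.prod_le_one (fun v _ => by linarith [h1 v]) (fun v _ => by linarith [h0 v])
    rw [Finset.sum_insert ha, Finset.prod_insert ha, Finset.erase_insert ha]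
    have hrw : ∀ k ∈ s, x k * ∏ v ∈ (insert a s).erase k, (1 - x v)
        = (1 - x a) * (x k * ∏ v ∈ s.erase k, (1 - x v)) := by
      intro k hk
      have hka : k ≠ a := fun h => ha (h ▸ hk)
      rw [Finset.erase_insert_of_ne hka.symm,
        Finset.prod_insert (fun h => ha (Finset.mem_of_mem_erase h))]
      ring
    rw [Finset.sum_congr rfl hrw, ← Finset.mul_sum]
    have hxa0 := h0 a
    have hxa1 := h1 a
    nlinarith [ih]

/-- the rates achievable by the random-allocation system belong to the
stability region of the orthogonal system. -/
theorem random_rates_in_stabilityRegion (Mp Ms : ℕ) (hMp : 1 ≤ Mp) (hMs : 1 ≤ Ms)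
    (μ : Fin Mp → Fin Ms → ℝ) (hμ : ∀ j k, 0 ≤ μ j k)
    (Γ : Fin Mp → Fin Ms → ℝ) (hΓ : ∀ j k, 0 ≤ Γ j k ∧ Γ j k ≤ 1)
    (hcol : ∀ k, ∑ j, Γ j k ≤ 1) :
    (fun k => ∑ j, μ j k * Γ j k * ∏ v ∈ Finset.univ.erase k, (1 - Γ j v))
      ∈ stabilityRegion Mp Ms μ := by
  have hprod0 : ∀ (j : Fin Mp) (k : Fin Ms),
      0 ≤ ∏ v ∈ Finset.univ.erase k, (1 - Γ j v) :=
    fun j k => Finset.prod_nonneg fun v _ => by linarith [(hΓ j v).2]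
  have hprod1 : ∀ (j : Fin Mp) (k : Fin Ms),
      ∏ v ∈ Finset.univ.erase k, (1 - Γ j v) ≤ 1 :=
    fun j k => Finset.prod_le_one (fun v _ => by linarith [(hΓ j v).2])
      (fun v _ => by linarith [(hΓ j v).1])
  refine ⟨fun k => Finset.sum_nonneg fun j _ => ?_,
    fun j k => Γ j k * ∏ v ∈ Finset.univ.erase k, (1 - Γ j v),
    fun j k => mul_nonneg (hΓ j k).1 (hprod0 j k), ?_, ?_, ?_⟩
  · exact mul_nonneg (mul_nonneg (hμ j k) (hΓ j k).1) (hprod0 j k)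
  · intro k
    calc ∑ j, Γ j k * ∏ v ∈ Finset.univ.erase k, (1 - Γ j v)
        ≤ ∑ j, Γ j k := Finset.sum_le_sum fun j _ =>
          mul_le_of_le_one_right (hΓ j k).1 (hprod1 j k)
      _ ≤ 1 := hcol k
  · intro j
    have := sum_prod_le (Finset.univ : Finset (Fin Ms)) (Γ j) (fun v => (hΓ j v).1)
      (fun v => (hΓ j v).2)
    have h0 : 0 ≤ ∏ v, (1 - Γ j v) :=
      Finset.prod_nonneg fun v _ => by linarith [(hΓ j v).2]
    linarith
  · intro k
    apply le_of_eq
    exact Finset.sum_congr rfl fun j _ => by ring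
end
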